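/- arXiv:2409.05898 — 5 statements merged into one kernel-verified Lean document; each statement's English description precedes it below -/
import Mathlib

section
/- Let P, P̂ be symmetric positive definite n×n real matrices with P ≺ P̂ ≺ η·P for some η > 1, and let ε > 0, χ ∈ (−1,1) satisfy (1−χ)²·η·ε + χ²·ε ≤ 1/2. Suppose s ∈ ℝⁿ satisfies sᵀ·P·s ≤ ε and sᵀ·P·s ≤ 1. Then any x ∈ ℝⁿ with (x − χ·s)ᵀ·P̂·(x − χ·s) = (1−χ)²·sᵀ·P̂·s satisfies xᵀ·P·x ≤ 1. -/
open Matrix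

lemma quad_expand {n : ℕ} (M : Matrix (Fin n) (Fin n) ℝ) (hT : Mᵀ = M)
    (u v : Fin n → ℝ) (c : ℝ) :
    (u + c • v) ⬝ᵥ (M *ᵥ (u + c • v)) =
      u ⬝ᵥ (M *ᵥ u) + 2 * c * (u ⬝ᵥ (M *ᵥ v)) + c ^ 2 * (v ⬝ᵥ (M *ᵥ v)) := by
  have hsym : v ⬝ᵥ (M *ᵥ u) = u ⬝ᵥ (M *ᵥ v) := by
    rw [dotProduct_mulVec, ← hT, vecMul_transpose, hT, dotProduct_comm]
  simp only [mulVec_add, dotProduct_add, add_dotProduct, mulVec_smul,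
    dotProduct_smul, smul_dotProduct, smul_eq_mul, hsym]
  ring

theorem stmt_4 {n : ℕ} (P Phat : Matrix (Fin n) (Fin n) ℝ)
    (hP : P.PosDef) (hPhat : Phat.PosDef)
    (η : ℝ) (hη : 1 < η)
    (h1 : (Phat - P).PosDef) (h2 : (η • P - Phat).PosDef)
    (ε χ : ℝ) (hε : 0 < ε) (hχ : χ ∈ Set.Ioo (-1 : ℝ) 1)
    (hcond : (1 - χ) ^ 2 * η * ε + χ ^ 2 * ε ≤ 1 / 2)
    (s : Fin n → ℝ) (hs : s ⬝ᵥ (P *ᵥ s) ≤ ε) (hs1 : s ⬝ᵥ (P *ᵥ s) ≤ 1)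
    (x : Fin n → ℝ)
    (hbd : (x - χ • s) ⬝ᵥ (Phat *ᵥ (x - χ • s)) = (1 - χ) ^ 2 * (s ⬝ᵥ (Phat *ᵥ s))) :
    x ⬝ᵥ (P *ᵥ x) ≤ 1 := by
  obtain ⟨y, hx⟩ : ∃ y, x = y + χ • s := ⟨x - χ • s, by abel⟩
  have hyx : x - χ • s = y := by rw [hx]; abel
  rw [hyx] at hbd
  have hT : Pᵀ = P := by simpa [Matrix.IsSymm] using hP.isHermitian
  have hb0 : 0 ≤ s ⬝ᵥ (P *ᵥ s) := by simpa using hP.posSemidef.dotProduct_mulVec_nonneg s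
  have h1' : 0 ≤ y ⬝ᵥ ((Phat - P) *ᵥ y) := by simpa using h1.posSemidef.dotProduct_mulVec_nonneg y
  have h2' : 0 ≤ s ⬝ᵥ ((η • P - Phat) *ᵥ s) := by simpa using h2.posSemidef.dotProduct_mulVec_nonneg s
  have ha : y ⬝ᵥ (P *ᵥ y) ≤ y ⬝ᵥ (Phat *ᵥ y) := by
    rw [sub_mulVec, dotProduct_sub] at h1'; linarith
  have hbH : s ⬝ᵥ (Phat *ᵥ s) ≤ η * (s ⬝ᵥ (P *ᵥ s)) := by
    rw [sub_mulVec, dotProduct_sub, smul_mulVec, dotProduct_smul, smul_eq_mul] at h2'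
    linarith
  have hexp3 : 0 ≤ y ⬝ᵥ (P *ᵥ y) + 2 * (-χ) * (y ⬝ᵥ (P *ᵥ s)) + (-χ) ^ 2 * (s ⬝ᵥ (P *ᵥ s)) := by
    rw [← quad_expand P hT y s (-χ)]
    simpa using hP.posSemidef.dotProduct_mulVec_nonneg (y + (-χ) • s)
  have hxexp : x ⬝ᵥ (P *ᵥ x) =
      y ⬝ᵥ (P *ᵥ y) + 2 * χ * (y ⬝ᵥ (P *ᵥ s)) + χ ^ 2 * (s ⬝ᵥ (P *ᵥ s)) := by
    rw [hx, quad_expand P hT y s χ]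
  have hsq1 : (0:ℝ) ≤ (1 - χ) ^ 2 := sq_nonneg _
  have hsq2 : (0:ℝ) ≤ χ ^ 2 := sq_nonneg _
  nlinarith [hbd, ha, hbH, hexp3, hxexp, mul_le_mul_of_nonneg_left hs hsq2,
    mul_le_mul_of_nonneg_left hs (mul_nonneg hsq1 (by linarith : (0:ℝ) ≤ η)),
    mul_le_mul_of_nonneg_left hbH hsq1]
end

section
/- Let Ā, P̂ ∈ ℝⁿˣⁿ with P̂ symmetric positive definite, let β, κ, η, ω > 0, and suppose (1+ω)·Āᵀ·P̂·Ā ≺ (β − κ·η·(1 + 1/ω))·P̂. If e, h ∈ ℝⁿ satisfy hᵀ·P̂·h ≤ κ·η·eᵀ·P̂·e, and e⁺ = Ā·e + h, then (e⁺)ᵀ·P̂·e⁺ ≤ β·eᵀ·P̂·e. -/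
open Matrix

theorem stmt_8 {n : ℕ} (Abar Phat : Matrix (Fin n) (Fin n) ℝ) (hPhat : Phat.PosDef)
    (β κ η ω : ℝ) (hβ : 0 < β) (hκ : 0 < κ) (hη : 0 < η) (hω : 0 < ω)
    (hlmi : ((β - κ * η * (1 + 1 / ω)) • Phat - (1 + ω) • (Abarᵀ * Phat * Abar)).PosDef)
    (e h eplus : Fin n → ℝ)
    (hmis : h ⬝ᵥ (Phat *ᵥ h) ≤ κ * η * (e ⬝ᵥ (Phat *ᵥ e)))
    (heplus : eplus = Abar *ᵥ e + h) :
    eplus ⬝ᵥ (Phat *ᵥ eplus) ≤ β * (e ⬝ᵥ (Phat *ᵥ e)) := by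
  obtain ⟨B, hB⟩ : ∃ B : Matrix (Fin n) (Fin n) ℝ, Phat = Bᴴ * B := by
    open scoped MatrixOrder in
    obtain ⟨B, hB⟩ := CStarAlgebra.nonneg_iff_eq_star_mul_self.mp hPhat.posSemidef.nonneg
    exact ⟨B, hB⟩
  have hBT : Bᴴ = Bᵀ := rfl
  have key : ∀ x y : Fin n → ℝ, x ⬝ᵥ (Phat *ᵥ y) = (B *ᵥ x) ⬝ᵥ (B *ᵥ y) := by
    intro x y
    rw [hB, hBT, ← mulVec_mulVec, dotProduct_mulVec x Bᵀ, vecMul_transpose]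
  set u := B *ᵥ (Abar *ᵥ e) with hu
  set v := B *ᵥ h with hv
  -- Young's inequality: 2 u⬝v ≤ ω u⬝u + (1/ω) v⬝v
  have hw : (0:ℝ) ≤ (ω • u - v) ⬝ᵥ (ω • u - v) :=
    Finset.sum_nonneg fun i _ => mul_self_nonneg _
  have hexp : (ω • u - v) ⬝ᵥ (ω • u - v)
      = ω^2 * (u ⬝ᵥ u) - 2 * ω * (u ⬝ᵥ v) + v ⬝ᵥ v := by
    simp [sub_dotProduct, dotProduct_sub, smul_dotProduct, dotProduct_smul,
      dotProduct_comm v u]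
    ring
  have young : 2 * (u ⬝ᵥ v) ≤ ω * (u ⬝ᵥ u) + (1/ω) * (v ⬝ᵥ v) := by
    rw [hexp] at hw
    have h1 : 2 * ω * (u ⬝ᵥ v) ≤ ω^2 * (u ⬝ᵥ u) + v ⬝ᵥ v := by linarith
    have hinv : ω * (1/ω) = 1 := mul_one_div_cancel hω.ne'
    have h2 : ω * (2 * (u ⬝ᵥ v)) ≤ ω * (ω * (u ⬝ᵥ u) + (1/ω) * (v ⬝ᵥ v)) := by
      have heq : ω * (ω * (u ⬝ᵥ u) + (1/ω) * (v ⬝ᵥ v)) = ω^2 * (u ⬝ᵥ u) + v ⬝ᵥ v := by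
        field_simp
      rw [heq]; linarith
    exact le_of_mul_le_mul_left h2 hω
  -- expand eplus
  have hE : eplus ⬝ᵥ (Phat *ᵥ eplus) = u ⬝ᵥ u + 2 * (u ⬝ᵥ v) + v ⬝ᵥ v := by
    rw [key, heplus, mulVec_add, add_dotProduct, dotProduct_add, dotProduct_add,
      dotProduct_comm (B *ᵥ h) (B *ᵥ (Abar *ᵥ e))]
    ring
  have hAe : (Abar *ᵥ e) ⬝ᵥ (Phat *ᵥ (Abar *ᵥ e)) = u ⬝ᵥ u := key _ _
  have hATPA : e ⬝ᵥ ((Abarᵀ * Phat * Abar) *ᵥ e)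
      = (Abar *ᵥ e) ⬝ᵥ (Phat *ᵥ (Abar *ᵥ e)) := by
    rw [← mulVec_mulVec, ← mulVec_mulVec, dotProduct_mulVec e Abarᵀ, vecMul_transpose]
  have hvv : v ⬝ᵥ v = h ⬝ᵥ (Phat *ᵥ h) := (key h h).symm
  -- LMI inequality
  have hLMI := hlmi.posSemidef.dotProduct_mulVec_nonneg e
  have hstar : star e = e := rfl
  rw [hstar, sub_mulVec, smul_mulVec, smul_mulVec, dotProduct_sub,
    dotProduct_smul, dotProduct_smul, hATPA, hAe] at hLMI
  simp only [smul_eq_mul] at hLMI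
  have hPe : (0:ℝ) ≤ e ⬝ᵥ (Phat *ᵥ e) := by
    have := hPhat.posSemidef.dotProduct_mulVec_nonneg e
    simpa using this
  have hωinv : (0:ℝ) < 1/ω := by positivity
  rw [hE]
  have h2 : v ⬝ᵥ v ≤ κ * η * (e ⬝ᵥ (Phat *ᵥ e)) := by rw [hvv]; exact hmis
  nlinarith [young, hLMI, h2, mul_le_mul_of_nonneg_left h2 (le_of_lt hωinv)]
end

section
/- Let Q̂ ∈ ℝⁿˣⁿ be symmetric positive definite, R̂ ∈ ℝᵐˣⁿ, A ∈ ℝⁿˣⁿ, B ∈ ℝⁿˣᵐ, and c > 0, ω > 0. If the block matrix [[c·Q̂, Q̂·Aᵀ + R̂ᵀ·Bᵀ],[A·Q̂ + B·R̂, Q̂/(1+ω)]] is positive definite, then with P̂ = Q̂⁻¹ and F̂ = R̂·Q̂⁻¹, the closed-loop matrix Ā = A + B·F̂ satisfies (1+ω)·Āᵀ·P̂·Ā ≺ c·P̂. -/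
open Matrix

lemma posDef_conj_aux {l p : Type*} [Fintype l] [Fintype p]
    {M : Matrix l l ℝ} (hM : M.PosDef) (N : Matrix l p ℝ)
    (hN : ∀ x : p → ℝ, x ≠ 0 → N *ᵥ x ≠ 0) : (Nᵀ * M * N).PosDef := by
  have h1 : Mᵀ = M := by
    have := hM.1
    rwa [Matrix.IsHermitian, conjTranspose_eq_transpose_of_trivial] at this
  refine PosDef.of_dotProduct_mulVec_pos ?_ ?_
  · show (Nᵀ * M * N)ᴴ = _
    rw [conjTranspose_eq_transpose_of_trivial, transpose_mul, transpose_mul,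
      transpose_transpose, h1, Matrix.mul_assoc]
  · intro x hx
    have h := hM.dotProduct_mulVec_pos (hN x hx)
    have hs1 : star (N *ᵥ x) = N *ᵥ x := funext fun i => star_trivial _
    have hs2 : star x = x := funext fun i => star_trivial _
    rw [hs1] at h
    rw [hs2]
    calc 0 < (N *ᵥ x) ⬝ᵥ M *ᵥ (N *ᵥ x) := h
    _ = x ⬝ᵥ (Nᵀ * M * N) *ᵥ x := by
        rw [← mulVec_mulVec, ← mulVec_mulVec, dotProduct_mulVec x, vecMul_transpose]

theorem stmt_10 {n m : ℕ} (Qhat : Matrix (Fin n) (Fin n) ℝ) (hQ : Qhat.PosDef)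
    (Rhat : Matrix (Fin m) (Fin n) ℝ) (A : Matrix (Fin n) (Fin n) ℝ)
    (B : Matrix (Fin n) (Fin m) ℝ) (c ω : ℝ) (hc : 0 < c) (hω : 0 < ω)
    (hblock : (Matrix.fromBlocks (c • Qhat) (Qhat * Aᵀ + Rhatᵀ * Bᵀ)
        (A * Qhat + B * Rhat) ((1 + ω)⁻¹ • Qhat)).PosDef) :
    (c • Qhat⁻¹ - (1 + ω) • ((A + B * (Rhat * Qhat⁻¹))ᵀ * Qhat⁻¹ *
        (A + B * (Rhat * Qhat⁻¹)))).PosDef := by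
  classical
  have hdet : IsUnit Qhat.det := isUnit_iff_ne_zero.mpr (ne_of_gt hQ.det_pos)
  set P := Qhat⁻¹ with hPdef
  have hQP : Qhat * P = 1 := Matrix.mul_nonsing_inv _ hdet
  have hPQ : P * Qhat = 1 := Matrix.nonsing_inv_mul _ hdet
  have hQsym : Qhatᵀ = Qhat := by
    have := hQ.1
    rwa [Matrix.IsHermitian, conjTranspose_eq_transpose_of_trivial] at this
  have hPsym : Pᵀ = P := by rw [hPdef, Matrix.transpose_nonsing_inv, hQsym]
  have hω1 : (0:ℝ) < 1 + ω := by linarith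
  set Ab := A + B * (Rhat * P) with hAb
  set N : Matrix (Fin n ⊕ Fin n) (Fin n) ℝ :=
    fromRows P (-((1 + ω) • (P * Ab))) with hN
  have hQP' : ∀ (X : Matrix (Fin n) (Fin n) ℝ), Qhat * (P * X) = X := by
    intro X; rw [← Matrix.mul_assoc, hQP, Matrix.one_mul]
  have hPQ' : ∀ (X : Matrix (Fin n) (Fin n) ℝ), P * (Qhat * X) = X := by
    intro X; rw [← Matrix.mul_assoc, hPQ, Matrix.one_mul]
  have h21 : A * Qhat + B * Rhat = Ab * Qhat := by
    rw [hAb, Matrix.add_mul, Matrix.mul_assoc B, Matrix.mul_assoc, hPQ, Matrix.mul_one]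
  have h12 : Qhat * Aᵀ + Rhatᵀ * Bᵀ = Qhat * Abᵀ := by
    rw [hAb, transpose_add, transpose_mul, transpose_mul, hPsym, Matrix.mul_add]
    congr 1
    rw [← Matrix.mul_assoc, ← Matrix.mul_assoc, hQP, Matrix.one_mul]
  have key : Nᵀ * (fromBlocks (c • Qhat) (Qhat * Aᵀ + Rhatᵀ * Bᵀ)
      (A * Qhat + B * Rhat) ((1 + ω)⁻¹ • Qhat)) * N
      = c • P - (1 + ω) • (Abᵀ * P * Ab) := by
    rw [h21, h12, hN, Matrix.mul_assoc, transpose_fromRows, fromBlocks_mul_fromRows,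
      fromCols_mul_fromRows]
    have e1 : Ab * Qhat * P + ((1 + ω)⁻¹ • Qhat) * (-((1 + ω) • (P * Ab))) = 0 := by
      rw [Matrix.mul_neg, Matrix.smul_mul, Matrix.mul_smul, smul_smul,
        inv_mul_cancel₀ (ne_of_gt hω1), one_smul, hQP', Matrix.mul_assoc, hQP,
        Matrix.mul_one, add_neg_cancel]
    rw [e1, Matrix.mul_zero, add_zero]
    simp only [Matrix.mul_add, Matrix.smul_mul, Matrix.mul_smul, Matrix.mul_neg, hQP, hPsym,
      Matrix.mul_one, Matrix.mul_assoc, hQP', hPQ']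
    abel
  rw [← key]
  apply posDef_conj_aux hblock
  intro x hx h0
  apply hx
  have hPx : P *ᵥ x = 0 := by
    funext i
    have := congrFun h0 (Sum.inl i)
    simpa [hN, fromRows_mulVec] using this
  calc x = (Qhat * P) *ᵥ x := by rw [hQP, Matrix.one_mulVec]
  _ = Qhat *ᵥ (P *ᵥ x) := by rw [Matrix.mulVec_mulVec]
  _ = 0 := by rw [hPx, Matrix.mulVec_zero]
end

section
/- Let P = Q⁻¹ with Q ∈ ℝⁿˣⁿ symmetric positive definite, F = R·Q⁻¹ for R ∈ ℝᵐˣⁿ, and β > 0. If the block matrix [[Q, Rᵀ],[R, (1/β)·Iₘ]] is positive definite, then for every s ∈ ℝⁿ with sᵀ·P·s ≤ 1, the vector a = F·s satisfies β·aᵀ·a < 1 whenever s ≠ 0, and β·aᵀ·a ≤ 1 in general. -/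
open Matrix

theorem stmt_11 {n m : ℕ} (Q : Matrix (Fin n) (Fin n) ℝ) (hQ : Q.PosDef)
    (R : Matrix (Fin m) (Fin n) ℝ) (β : ℝ) (hβ : 0 < β)
    (hblock : (Matrix.fromBlocks Q Rᵀ R ((1 / β) • (1 : Matrix (Fin m) (Fin m) ℝ))).PosDef) :
    ∀ s : Fin n → ℝ, s ⬝ᵥ (Q⁻¹ *ᵥ s) ≤ 1 →
      (s ≠ 0 → β * ((R * Q⁻¹) *ᵥ s ⬝ᵥ (R * Q⁻¹) *ᵥ s) < 1) ∧
      β * ((R * Q⁻¹) *ᵥ s ⬝ᵥ (R * Q⁻¹) *ᵥ s) ≤ 1 := by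
  intro s hs
  have hdet : IsUnit Q.det := isUnit_iff_ne_zero.mpr hQ.det_pos.ne'
  set x : Fin n → ℝ := Q⁻¹ *ᵥ s with hxdef
  set a : Fin m → ℝ := R *ᵥ x with hadef
  have ha' : (R * Q⁻¹) *ᵥ s = a := by rw [hadef, hxdef, mulVec_mulVec]
  have hsx : s = Q *ᵥ x := by
    rw [hxdef, mulVec_mulVec, Matrix.mul_nonsing_inv Q hdet, one_mulVec]
  -- s ⬝ᵥ Q⁻¹ *ᵥ s = x ⬝ᵥ Q *ᵥ x
  have hform : s ⬝ᵥ (Q⁻¹ *ᵥ s) = x ⬝ᵥ Q *ᵥ x := by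
    have h : s ⬝ᵥ (Q⁻¹ *ᵥ s) = (Q *ᵥ x) ⬝ᵥ x := by rw [← hxdef, ← hsx]
    rw [h, dotProduct_comm]
  -- key strict inequality for x ≠ 0
  have key : ∀ x' : Fin n → ℝ, x' ≠ 0 →
      β * ((R *ᵥ x') ⬝ᵥ (R *ᵥ x')) < x' ⬝ᵥ Q *ᵥ x' := by
    intro x' hx'
    set a' : Fin m → ℝ := R *ᵥ x' with ha'def
    set v : (Fin n) ⊕ (Fin m) → ℝ := Sum.elim x' (-(β • a')) with hvdef
    have hvne : v ≠ 0 := by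
      intro h
      apply hx'
      funext i
      have := congrFun h (Sum.inl i)
      simpa [hvdef] using this
    have hpos := hblock.dotProduct_mulVec_pos hvne
    rw [star_trivial] at hpos
    have hcalc : v ⬝ᵥ (Matrix.fromBlocks Q Rᵀ R ((1 / β) • (1 : Matrix (Fin m) (Fin m) ℝ))) *ᵥ v
        = x' ⬝ᵥ Q *ᵥ x' - β * (a' ⬝ᵥ a') := by
      rw [hvdef, fromBlocks_mulVec, sumElim_dotProduct_sumElim]
      have h1 : x' ⬝ᵥ (Rᵀ *ᵥ (-(β • a'))) = -(β * (a' ⬝ᵥ a')) := by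
        rw [dotProduct_mulVec, vecMul_transpose, ← ha'def, dotProduct_neg, dotProduct_smul]
        simp [smul_eq_mul]
      have h2 : ((1 / β) • (1 : Matrix (Fin m) (Fin m) ℝ)) *ᵥ (-(β • a')) = -a' := by
        rw [smul_mulVec, one_mulVec]
        simp [smul_smul, one_div, inv_mul_cancel₀ hβ.ne']
      simp only [Sum.elim_comp_inl, Sum.elim_comp_inr]
      rw [dotProduct_add, dotProduct_add, h1, h2, ← ha'def]
      have h3 : (-(β • a')) ⬝ᵥ a' = -(β * (a' ⬝ᵥ a')) := by
        simp [smul_dotProduct, smul_eq_mul]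
      have h4 : (-(β • a')) ⬝ᵥ (-a') = β * (a' ⬝ᵥ a') := by
        simp [smul_dotProduct, smul_eq_mul]
      rw [h3, h4]
      ring
    rw [hcalc] at hpos
    linarith
  constructor
  · intro hsne
    have hxne : x ≠ 0 := by
      intro h
      apply hsne
      rw [hsx, h, mulVec_zero]
    have := key x hxne
    rw [ha']
    calc β * (a ⬝ᵥ a) < x ⬝ᵥ Q *ᵥ x := this
      _ = s ⬝ᵥ (Q⁻¹ *ᵥ s) := hform.symm
      _ ≤ 1 := hs
  · rcases eq_or_ne s 0 with h0 | hne
    · rw [ha', hadef, hxdef, h0]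
      simp
    · have hxne : x ≠ 0 := by
        intro h
        apply hne
        rw [hsx, h, mulVec_zero]
      have := key x hxne
      rw [ha']
      have := hform ▸ hs
      linarith [key x hxne, hform ▸ hs]
end

section
/- Let A, H, P ∈ ℝⁿˣⁿ with P symmetric positive definite, H = Āᵀ·P·Ā for some matrix Ā, and suppose 0 ≺ H ≺ α·P for some α ∈ (0,1). If a sequence of states s : ℕ → ℝⁿ satisfies, for all k, s(k)ᵀ·H·s(k) − s(k+1)ᵀ·P·s(k+1) ≥ α − 1, and s(0)ᵀ·P·s(0) ≤ 1, then s(k)ᵀ·P·s(k) ≤ 1 for all k. -/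
open Matrix

theorem stmt_13 {n : ℕ} (Abar H P : Matrix (Fin n) (Fin n) ℝ) (hP : P.PosDef)
    (hH : H = Abarᵀ * P * Abar) (α : ℝ) (hα : α ∈ Set.Ioo (0:ℝ) 1)
    (hHpos : H.PosDef) (hHP : (α • P - H).PosDef)
    (s : ℕ → Fin n → ℝ)
    (hr : ∀ k, α - 1 ≤ s k ⬝ᵥ (H *ᵥ s k) - s (k + 1) ⬝ᵥ (P *ᵥ s (k + 1)))
    (h0 : s 0 ⬝ᵥ (P *ᵥ s 0) ≤ 1) :
    ∀ k, s k ⬝ᵥ (P *ᵥ s k) ≤ 1 := by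
  intro k
  induction k with
  | zero => exact h0
  | succ k ih =>
    have hq : 0 ≤ s k ⬝ᵥ ((α • P - H) *ᵥ s k) := by
      have := hHP.posSemidef.dotProduct_mulVec_nonneg (s k)
      simpa using this
    have hexp : s k ⬝ᵥ ((α • P - H) *ᵥ s k)
        = α * (s k ⬝ᵥ (P *ᵥ s k)) - s k ⬝ᵥ (H *ᵥ s k) := by
      simp [sub_mulVec, smul_mulVec, dotProduct_sub, dotProduct_smul,
        smul_eq_mul]
    have hH_le : s k ⬝ᵥ (H *ᵥ s k) ≤ α * (s k ⬝ᵥ (P *ᵥ s k)) := by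
      rw [hexp] at hq; linarith
    have hα1 : α * (s k ⬝ᵥ (P *ᵥ s k)) ≤ α := by
      nlinarith [hα.1]
    have := hr k
    linarith [hα.2]
end
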